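/- arXiv:2507.00463 — 3 statements merged into one kernel-verified Lean document; each statement's English description precedes it below -/
import Mathlib

section
/- For all real numbers $y > x > 1$, the Gamma function satisfies $\Gamma(x)/\Gamma(y) \leq (x^{x-1}/y^{y-1}) e^{y-x}$. -/
/-!
Write `ψ = (log ∘ Γ)'`. By convexity of `log ∘ Γ`, its slope over `[t, t + 1]`, which is `log t`
since `Γ (t + 1) = t Γ t`, is at most `ψ (t + 1) = ψ t + 1 / t`; hence `ψ t ≥ log t - 1 / t`. The
right-hand side is the derivative of `(t - 1) log t - t`, so `log Γ t - ((t - 1) log t - t)` is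
monotone on `(0, ∞)`, and exponentiating its values at `x < y` gives the inequality.
-/

open Real Set

namespace Real

lemma log_Gamma_add_one {t : ℝ} (ht : 0 < t) :
    log (Gamma (t + 1)) = log t + log (Gamma t) := by
  rw [Gamma_add_one ht.ne', log_mul ht.ne' (Gamma_pos_of_pos ht).ne']

lemma differentiableAt_log_Gamma {t : ℝ} (ht : 0 < t) : DifferentiableAt ℝ (log ∘ Gamma) t :=
  (differentiableAt_Gamma fun m => ((neg_nonpos.mpr m.cast_nonneg).trans_lt ht).ne').log
    (Gamma_pos_of_pos ht).ne'

lemma deriv_log_Gamma_add_one {t : ℝ} (ht : 0 < t) :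
    deriv (log ∘ Gamma) (t + 1) = deriv (log ∘ Gamma) t + 1 / t := by
  have hshift : (fun s => (log ∘ Gamma) (s + 1)) =ᶠ[nhds t] fun s => log s + (log ∘ Gamma) s := by
    filter_upwards [eventually_gt_nhds ht] with s hs
    exact log_Gamma_add_one hs
  have hsum : HasDerivAt (fun s => log s + (log ∘ Gamma) s)
      (t⁻¹ + deriv (log ∘ Gamma) t) t :=
    (hasDerivAt_log ht.ne').add (differentiableAt_log_Gamma ht).hasDerivAt
  rw [← deriv_comp_add_const, hshift.deriv_eq, hsum.deriv, one_div, add_comm]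

lemma log_sub_inv_le_deriv_log_Gamma {t : ℝ} (ht : 0 < t) :
    log t - 1 / t ≤ deriv (log ∘ Gamma) t := by
  have hslope : slope (log ∘ Gamma) t (t + 1) ≤ deriv (log ∘ Gamma) (t + 1) :=
    convexOn_log_Gamma.slope_le_deriv ht (by simp only [mem_Ioi]; linarith) (by linarith)
      (differentiableAt_log_Gamma (by linarith))
  have hslope_eq : slope (log ∘ Gamma) t (t + 1) = log t := by
    rw [slope_def_field, Function.comp_apply, Function.comp_apply, log_Gamma_add_one ht]
    ring
  rw [hslope_eq, deriv_log_Gamma_add_one ht] at hslope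
  linarith

lemma hasDerivAt_mul_log_sub {t : ℝ} (ht : 0 < t) :
    HasDerivAt (fun s => (s - 1) * log s - s) (log t - 1 / t) t := by
  refine ((((hasDerivAt_id' t).sub_const 1).fun_mul (hasDerivAt_log ht.ne')).fun_sub
    (hasDerivAt_id' t)).congr_deriv ?_
  field_simp
  ring

lemma monotoneOn_log_Gamma_sub_mul_log :
    MonotoneOn (fun t => log (Gamma t) - ((t - 1) * log t - t)) (Ioi 0) := by
  have hderiv : ∀ t ∈ Ioi (0 : ℝ), HasDerivAt (fun t => log (Gamma t) - ((t - 1) * log t - t))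
      (deriv (log ∘ Gamma) t - (log t - 1 / t)) t := fun t ht =>
    (differentiableAt_log_Gamma ht).hasDerivAt.sub (hasDerivAt_mul_log_sub ht)
  refine monotoneOn_of_deriv_nonneg (convex_Ioi 0)
    (fun t ht => (hderiv t ht).continuousAt.continuousWithinAt)
    (fun t ht => (hderiv t (interior_subset ht)).differentiableAt.differentiableWithinAt)
    fun t ht => ?_
  rw [interior_Ioi] at ht
  rw [(hderiv t ht).deriv, sub_nonneg]
  exact log_sub_inv_le_deriv_log_Gamma ht

end Real

/-- For all real numbers `y > x > 1`, `Γ(x)/Γ(y) ≤ (x^(x-1)/y^(y-1)) e^(y-x)`. -/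
theorem stmt_1 (x y : ℝ) (hx : 1 < x) (hxy : x < y) :
    Real.Gamma x / Real.Gamma y ≤ x ^ (x - 1) / y ^ (y - 1) * Real.exp (y - x) := by
  have hx0 : 0 < x := by linarith
  have hy0 : 0 < y := by linarith
  have hmono := monotoneOn_log_Gamma_sub_mul_log hx0 hy0 hxy.le
  have lhs_eq : Gamma x / Gamma y = exp (log (Gamma x) - log (Gamma y)) := by
    rw [exp_sub, exp_log (Gamma_pos_of_pos hx0), exp_log (Gamma_pos_of_pos hy0)]
  have rhs_eq : x ^ (x - 1) / y ^ (y - 1) * exp (y - x)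
      = exp (((x - 1) * log x - x) - ((y - 1) * log y - y)) := by
    rw [rpow_def_of_pos hx0, rpow_def_of_pos hy0, ← exp_sub, ← exp_add]
    ring_nf
  rw [lhs_eq, rhs_eq, exp_le_exp]
  beta_reduce at hmono
  linarith
end

section
/- Let $h : \mathbb{R}_+^d \to \mathbb{R}$ be $1$-Lipschitz with respect to the $\ell^1$ norm, let $\alpha > 1$, and let $\bm{Z}$ be a random vector in $(0,\infty)^d$ whose coordinates each have the Fréchet $\mathcal{F}(\alpha)$ distribution. Define $P_t h(\bm{x}) = \mathbb{E}[h(e^{-t/\alpha}\bm{x} \oplus (1-e^{-t})^{1/\alpha}\bm{Z})]$ where $\oplus$ is the coordinatewise maximum. Then $P_t h$ is $d\,e^{-t/\alpha}$-Lipschitz with respect to the $\ell^1$ norm for every $t \geq 0$. -/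
open MeasureTheory ProbabilityTheory

/-- If `h` is `1`-Lipschitz for the `ℓ¹` norm on `ℝ₊^d`, `α > 1` and `Z` has Fréchet
`𝓕(α)` marginals, then `P_t h(x) = E[h(e^(-t/α) x ⊕ (1-e^(-t))^(1/α) Z)]` is
`d e^(-t/α)`-Lipschitz for the `ℓ¹` norm. -/
theorem stmt_18 {Ω : Type*} [MeasureSpace Ω] [IsProbabilityMeasure (ℙ : Measure Ω)]
    (d : ℕ) (α : ℝ) (hα : 1 < α)
    (h : (Fin d → ℝ) → ℝ)
    (hLip : ∀ x y : Fin d → ℝ, (∀ j, 0 ≤ x j) → (∀ j, 0 ≤ y j) →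
      |h x - h y| ≤ ∑ j, |x j - y j|)
    (Z : Ω → Fin d → ℝ) (hZmeas : Measurable Z) (hZpos : ∀ ω j, 0 < Z ω j)
    (hfrechet : ∀ j, ∀ s : ℝ, 0 < s →
      ℙ {ω | Z ω j ≤ s} = ENNReal.ofReal (Real.exp (-s ^ (-α))))
    (P : ℝ → (Fin d → ℝ) → ℝ)
    (hP : ∀ t x, P t x = ∫ ω, h (fun j =>
      max (Real.exp (-t / α) * x j) ((1 - Real.exp (-t)) ^ (1 / α) * Z ω j))) :
    ∀ t : ℝ, 0 ≤ t → ∀ x y : Fin d → ℝ, (∀ j, 0 ≤ x j) → (∀ j, 0 ≤ y j) →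
      |P t x - P t y| ≤ d * Real.exp (-t / α) * ∑ j, |x j - y j| := by
  intro t ht x y hx hy
  set a : ℝ := Real.exp (-t / α) with ha_def
  set c : ℝ := (1 - Real.exp (-t)) ^ (1 / α) with hc_def
  have ha : 0 < a := Real.exp_pos _
  set S : ℝ := ∑ j, |x j - y j| with hS_def
  have hS0 : 0 ≤ S := Finset.sum_nonneg fun j _ => abs_nonneg _
  -- the modified h is globally Lipschitz, hence measurable
  set g : (Fin d → ℝ) → ℝ := fun v => h (fun j => max (v j) 0) with hg_def
  have hgLip : LipschitzWith d g := by
    apply LipschitzWith.of_dist_le_mul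
    intro u v
    rw [Real.dist_eq]
    calc |g u - g v| ≤ ∑ j, |max (u j) 0 - max (v j) 0| :=
          hLip _ _ (fun j => le_max_right _ _) (fun j => le_max_right _ _)
      _ ≤ ∑ j, |u j - v j| := by
          exact Finset.sum_le_sum fun j _ => abs_max_sub_max_le_abs _ _ _
      _ ≤ ∑ _j : Fin d, dist u v := by
          exact Finset.sum_le_sum fun j _ => by
            rw [← Real.dist_eq]; exact dist_le_pi_dist u v j
      _ = d * dist u v := by simp [Finset.sum_const, mul_comm]
  have hgmeas : Measurable g := hgLip.continuous.measurable
  set fX : Ω → ℝ := fun ω => h (fun j => max (a * x j) (c * Z ω j)) with hfX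
  set fY : Ω → ℝ := fun ω => h (fun j => max (a * y j) (c * Z ω j)) with hfY
  have hmeasF : ∀ v : Fin d → ℝ,
      Measurable (fun ω => h (fun j => max (a * v j) (c * Z ω j))) := by
    intro v
    have hF : Measurable (fun ω j => max (a * v j) (c * Z ω j)) := by
      apply measurable_pi_lambda
      intro j
      exact measurable_const.max (measurable_const.mul ((measurable_pi_apply j).comp hZmeas))
    have : (fun ω => h (fun j => max (a * v j) (c * Z ω j)))
        = g ∘ (fun ω j => max (a * v j) (c * Z ω j)) := by
      funext ω
      simp only [Function.comp, hg_def]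
      congr 1
      funext j
      have hc0' : (0:ℝ) ≤ c := by
        apply Real.rpow_nonneg
        have : Real.exp (-t) ≤ 1 := Real.exp_le_one_iff.mpr (by linarith)
        linarith
      exact (max_eq_left (le_trans (mul_nonneg hc0' (hZpos ω j).le) (le_max_right _ _))).symm
    rw [this]
    exact hgmeas.comp hF
  have hc0 : 0 ≤ c := by
    apply Real.rpow_nonneg
    have : Real.exp (-t) ≤ 1 := Real.exp_le_one_iff.mpr (by linarith)
    linarith
  have hnonnegX : ∀ ω j, 0 ≤ max (a * x j) (c * Z ω j) :=
    fun ω j => le_trans (mul_nonneg ha.le (hx j)) (le_max_left _ _)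
  have hnonnegY : ∀ ω j, 0 ≤ max (a * y j) (c * Z ω j) :=
    fun ω j => le_trans (mul_nonneg ha.le (hy j)) (le_max_left _ _)
  have key : ∀ ω, |fX ω - fY ω| ≤ a * S := by
    intro ω
    calc |fX ω - fY ω|
        ≤ ∑ j, |max (a * x j) (c * Z ω j) - max (a * y j) (c * Z ω j)| :=
          hLip _ _ (hnonnegX ω) (hnonnegY ω)
      _ ≤ ∑ j, |a * x j - a * y j| :=
          Finset.sum_le_sum fun j _ => abs_max_sub_max_le_abs _ _ _
      _ = a * S := by
          rw [hS_def, Finset.mul_sum]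
          refine Finset.sum_congr rfl fun j _ => ?_
          rw [← mul_sub, abs_mul, abs_of_pos ha]
  have hPx : P t x = ∫ ω, fX ω := hP t x
  have hPy : P t y = ∫ ω, fY ω := hP t y
  have hdiff_int : Integrable (fun ω => fX ω - fY ω) := by
    apply Integrable.mono' (integrable_const (a * S))
    · exact ((hmeasF x).sub (hmeasF y)).aestronglyMeasurable
    · exact Filter.Eventually.of_forall fun ω => key ω
  have main : |P t x - P t y| ≤ a * S := by
    rw [hPx, hPy]
    by_cases hInt : Integrable fX
    · have hIntY : Integrable fY := by
        have : fY = fX - (fun ω => fX ω - fY ω) := by funext ω; simp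
        rw [this]
        exact hInt.sub hdiff_int
      rw [← integral_sub hInt hIntY]
      calc |∫ ω, (fX ω - fY ω)| ≤ ∫ ω, |fX ω - fY ω| := by
            simpa [Real.norm_eq_abs] using
              norm_integral_le_integral_norm (fun ω => fX ω - fY ω)
        _ ≤ ∫ _ω : Ω, a * S := by
            apply integral_mono hdiff_int.abs (integrable_const _)
            exact fun ω => key ω
        _ = a * S := by simp
    · have hIntY : ¬ Integrable fY := by
        intro hY
        apply hInt
        have : fX = fY + (fun ω => fX ω - fY ω) := by funext ω; simp
        rw [this]
        exact hY.add hdiff_int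
      rw [integral_undef hInt, integral_undef hIntY]
      simpa using mul_nonneg ha.le hS0
  refine main.trans ?_
  rcases Nat.eq_zero_or_pos d with hd | hd
  · subst hd
    simp [hS_def]
  · have h1 : (1 : ℝ) ≤ d := by exact_mod_cast hd
    nlinarith [mul_nonneg ha.le hS0]
end

section
/- Let $\alpha > 0$, $\bm{z} \in (0,\infty)^d$, $F \in (0,1)$, and define $g(\bm{x})$ as in the Kolmogorov Stein solution: $g(\bm{x}) = \alpha M(\bm{x}) F - F \int_{\alpha M(\bm{x})}^\infty (F^{-e^{-t}} - 1)\,dt$ with $M(\bm{x}) = (\max_j \log(x^j/z^j))_+$. Then $g$ is $(\alpha/z^*)$-Lipschitz on $\mathbb{R}_+^d$ with respect to the $\ell^1$ norm, where $z^* = \min_j z^j$. -/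
/-!
Write `g x = h (α * M x)` with `h s = s F - F ∫_s^∞ (F^(-e^(-t)) - 1) dt`. Since
`F + F (F^(-e^(-t)) - 1) = F^(1 - e^(-t))`, we get `h s - h s' = ∫_{s'}^s F^(1 - e^(-t)) dt`,
and the integrand lies in `[0, 1]` for `t ≥ 0`, so `h` is `1`-Lipschitz on `[0, ∞)`. On the
nonnegative orthant `M x = max_j log (max (x^j) (z^j) / z^j)`, a maximum of functions that are
`(1 / z^j)`-Lipschitz in the single coordinate `x^j`; hence `M` is `(1 / z*)`-Lipschitz
for the sup norm, which is dominated by the `ℓ¹` norm.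
-/

open MeasureTheory Set

theorem LipschitzWith.ciSup {α ι : Type*} [PseudoMetricSpace α] [Finite ι] [Nonempty ι]
    {K : NNReal} {f : ι → α → ℝ} (hf : ∀ i, LipschitzWith K (f i)) :
    LipschitzWith K fun x ↦ ⨆ i, f i x := by
  refine LipschitzWith.of_le_add_mul K fun x y ↦ ciSup_le fun i ↦ ?_
  calc f i x ≤ f i y + K * dist x y := (hf i).le_add_mul x y
    _ ≤ (⨆ i, f i y) + K * dist x y := by
      gcongr; exact le_ciSup (Finite.bddAbove_range fun i ↦ f i y) i

theorem dist_le_sum_abs_sub {ι : Type*} [Fintype ι] (x y : ι → ℝ) :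
    dist x y ≤ ∑ i, |x i - y i| :=
  (dist_pi_le_iff (by positivity)).2 fun i ↦ (Real.dist_eq _ _).trans_le
    (Finset.single_le_sum (f := fun i ↦ |x i - y i|) (fun _ _ ↦ abs_nonneg _)
      (Finset.mem_univ i))

theorem lipschitzWith_log_max_div {c : ℝ} (hc : 0 < c) :
    LipschitzWith (Real.toNNReal c⁻¹) fun t ↦ Real.log (max t c / c) := by
  refine LipschitzWith.of_le_add_mul' c⁻¹ fun s t ↦ ?_
  have hs : 0 < max s c := lt_max_of_lt_right hc
  have ht : c ≤ max t c := le_max_right t c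
  have hlog : Real.log (max s c / c) - Real.log (max t c / c) = Real.log (max s c / max t c) := by
    rw [Real.log_div hs.ne' hc.ne', Real.log_div (hc.trans_le ht).ne' hc.ne',
      Real.log_div hs.ne' (hc.trans_le ht).ne']
    ring
  have key : Real.log (max s c / max t c) ≤ c⁻¹ * dist s t :=
    calc Real.log (max s c / max t c) ≤ max s c / max t c - 1 :=
          Real.log_le_sub_one_of_pos (by positivity)
      _ = (max s c - max t c) / max t c := by field_simp
      _ ≤ |s - t| / c := by
          gcongr
          exact (le_abs_self _).trans (abs_max_sub_max_le_abs s t c)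
      _ = c⁻¹ * dist s t := by rw [Real.dist_eq, div_eq_inv_mul]
  linarith

theorem max_log_div_zero {t c : ℝ} (ht : 0 ≤ t) (hc : 0 < c) :
    max (Real.log (t / c)) 0 = Real.log (max t c / c) := by
  rcases le_total t c with htc | hct
  · rw [max_eq_right htc, div_self hc.ne', Real.log_one]
    exact max_eq_right (Real.log_nonpos (by positivity) ((div_le_one hc).2 htc))
  · rw [max_eq_left hct]
    exact max_eq_left (Real.log_nonneg ((one_le_div hc).2 hct))

theorem max_ciSup_log_div_zero {ι : Type*} [Finite ι] [Nonempty ι] {x z : ι → ℝ}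
    (hx : ∀ i, 0 ≤ x i) (hz : ∀ i, 0 < z i) :
    max (⨆ i, Real.log (x i / z i)) 0 = ⨆ i, Real.log (max (x i) (z i) / z i) := by
  rw [Monotone.map_ciSup_of_continuousAt (f := fun a ↦ max a 0)
    (continuous_id.max continuous_const).continuousAt (monotone_id.max monotone_const)
    (Finite.bddAbove_range _)]
  exact iSup_congr fun i ↦ max_log_div_zero (hx i) (hz i)

theorem lipschitzWith_ciSup_log_max_div {ι : Type*} [Fintype ι] [Nonempty ι] {z : ι → ℝ}
    (hz : ∀ i, 0 < z i) :
    LipschitzWith (Real.toNNReal (⨅ i, z i)⁻¹)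
      fun x : ι → ℝ ↦ ⨆ i, Real.log (max (x i) (z i) / z i) := by
  refine LipschitzWith.ciSup fun i ↦
    ((lipschitzWith_log_max_div (hz i)).comp (LipschitzWith.eval i)).weaken ?_
  rw [mul_one]
  gcongr
  · exact (exists_eq_ciInf_of_finite (f := z)).elim fun i hi ↦ hi ▸ hz i
  · exact ciInf_le (Finite.bddBelow_range z) i

theorem integrableOn_rpow_neg_exp_neg_sub_one {F : ℝ} (hF0 : 0 < F) (hF1 : F ≤ 1) {s : ℝ}
    (hs : 0 ≤ s) : IntegrableOn (fun t ↦ F ^ (-Real.exp (-t)) - 1) (Ioi s) := by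
  have hcont : Continuous fun t ↦ F ^ (-Real.exp (-t)) - 1 := by
    fun_prop (disch := exact hF0.ne')
  refine ((exp_neg_integrableOn_Ioi s one_pos).const_mul (F⁻¹ - 1)).mono'
    hcont.aestronglyMeasurable.restrict ?_
  filter_upwards [ae_restrict_mem measurableSet_Ioi] with t ht
  have hu0 : 0 ≤ Real.exp (-t) := (Real.exp_pos _).le
  have hu1 : Real.exp (-t) ≤ 1 := Real.exp_le_one_iff.2 (by linarith [ht.out])
  have hlow : 1 ≤ F ^ (-Real.exp (-t)) :=
    Real.one_le_rpow_of_pos_of_le_one_of_nonpos hF0 hF1 (by linarith)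
  -- Bernoulli's inequality for the exponent `exp (-t) ∈ [0, 1]`
  have hup : F ^ (-Real.exp (-t)) ≤ 1 + Real.exp (-t) * (F⁻¹ - 1) := by
    rw [Real.rpow_neg hF0.le, ← Real.inv_rpow hF0.le]
    simpa using rpow_one_add_le_one_add_mul_self (s := F⁻¹ - 1)
      (by linarith [inv_pos.2 hF0]) hu0 hu1
  rw [Real.norm_eq_abs, abs_of_nonneg (by linarith), neg_one_mul]
  linarith

noncomputable def steinProfile (F s : ℝ) : ℝ :=
  s * F - F * ∫ t in Ioi s, (F ^ (-Real.exp (-t)) - 1)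

theorem steinProfile_sub {F : ℝ} (hF0 : 0 < F) (hF1 : F ≤ 1) {s s' : ℝ} (hs : 0 ≤ s)
    (hs' : 0 ≤ s') :
    steinProfile F s - steinProfile F s' = ∫ t in s'..s, F ^ (1 - Real.exp (-t)) := by
  have hf : IntervalIntegrable (fun t ↦ F ^ (-Real.exp (-t)) - 1) volume s' s := by
    apply Continuous.intervalIntegrable
    fun_prop (disch := exact hF0.ne')
  have hpow : ∀ t, F ^ (1 - Real.exp (-t)) = F + F * (F ^ (-Real.exp (-t)) - 1) := fun t ↦ by
    rw [sub_eq_add_neg, Real.rpow_add hF0, Real.rpow_one]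
    ring
  simp_rw [hpow]
  rw [intervalIntegral.integral_add intervalIntegrable_const (hf.const_mul F),
    intervalIntegral.integral_const_mul, ← intervalIntegral.integral_Ioi_sub_Ioi'
      (integrableOn_rpow_neg_exp_neg_sub_one hF0 hF1 hs')
      (integrableOn_rpow_neg_exp_neg_sub_one hF0 hF1 hs),
    intervalIntegral.integral_const, steinProfile, steinProfile, smul_eq_mul]
  ring

theorem lipschitzOnWith_steinProfile {F : ℝ} (hF0 : 0 < F) (hF1 : F ≤ 1) :
    LipschitzOnWith 1 (steinProfile F) (Ici 0) := by
  refine LipschitzOnWith.of_dist_le_mul fun s hs s' hs' ↦ ?_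
  rw [Real.dist_eq, steinProfile_sub hF0 hF1 hs hs', NNReal.coe_one, Real.dist_eq]
  refine (Real.norm_eq_abs _).symm.trans_le
    (intervalIntegral.norm_integral_le_of_norm_le_const fun t ht ↦ ?_)
  have ht0 : 0 ≤ t := (le_min hs' hs).trans (uIoc_subset_uIcc ht).1
  have hexp : 0 ≤ 1 - Real.exp (-t) := by
    linarith [Real.exp_le_one_iff.2 (neg_nonpos.2 ht0)]
  rw [Real.norm_eq_abs, abs_of_nonneg (Real.rpow_nonneg hF0.le _)]
  exact Real.rpow_le_one hF0.le hF1 hexp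

/-- The Kolmogorov Stein solution `g` is `(α / z*)`-Lipschitz on `ℝ₊^d` for the `ℓ¹`
norm, where `z* = min_j z^j`. -/
theorem stmt_19 (d : ℕ) (hd : 0 < d) (α : ℝ) (hα : 0 < α)
    (z : Fin d → ℝ) (hz : ∀ j, 0 < z j) (F : ℝ) (hF0 : 0 < F) (hF1 : F < 1)
    (M : (Fin d → ℝ) → ℝ) (hM : ∀ x, M x = max (⨆ j, Real.log (x j / z j)) 0)
    (g : (Fin d → ℝ) → ℝ)
    (hg : ∀ x, g x = α * M x * F
        - F * ∫ t in Ioi (α * M x), (F ^ (-Real.exp (-t)) - 1)) :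
    ∀ x y : Fin d → ℝ, (∀ j, 0 ≤ x j) → (∀ j, 0 ≤ y j) →
      |g x - g y| ≤ α / (⨅ j, z j) * ∑ j, |x j - y j| := by
  intro x y hx hy
  have : Nonempty (Fin d) := Fin.pos_iff_nonempty.mp hd
  have hzmin : 0 < ⨅ j, z j := (exists_eq_ciInf_of_finite (f := z)).elim fun j hj ↦ hj ▸ hz j
  have hMx := (hM x).trans (max_ciSup_log_div_zero hx hz)
  have hMy := (hM y).trans (max_ciSup_log_div_zero hy hz)
  have hαM : ∀ x, α * M x ∈ Ici 0 :=
    fun x ↦ mul_nonneg hα.le ((hM x).symm ▸ le_max_right _ _)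
  calc |g x - g y| = dist (steinProfile F (α * M x)) (steinProfile F (α * M y)) := by
        rw [hg x, hg y, Real.dist_eq, steinProfile, steinProfile]
    _ ≤ dist (α * M x) (α * M y) := by
        simpa using (lipschitzOnWith_steinProfile hF0 hF1.le).dist_le_mul _ (hαM x) _ (hαM y)
    _ = α * dist (M x) (M y) := by
        rw [Real.dist_eq, Real.dist_eq, ← mul_sub, abs_mul, abs_of_pos hα]
    _ ≤ α * ((⨅ j, z j)⁻¹ * dist x y) := by
        gcongr
        rw [hMx, hMy]
        simpa [hzmin.le] using (lipschitzWith_ciSup_log_max_div hz).dist_le_mul x y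
    _ ≤ α / (⨅ j, z j) * ∑ j, |x j - y j| := by
        rw [div_eq_mul_inv, mul_assoc]
        gcongr
        exact dist_le_sum_abs_sub x y
end
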